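/- arXiv:1711.02394 — 2 statements merged into one kernel-verified Lean document; each statement's English description precedes it below -/
import Mathlib

section
/- For integers n and k with n ≥ 2k + 1 and k ≥ 0, the edge Szeged index of C_0(n,k) equals 2kn + 2k² − 5k. -/
/-!
Vertex `0` of `C₀(n,k)` is adjacent to every other vertex, and deleting it leaves a matching
(the `k` bases of the triangles). In such a cone over a matching all distances are at most `2`,
so every `m_u(e)` can be read off from degrees: a spoke `0v` contributes
`(|E| - deg v)(deg v - 1) = (|E| - 2)(deg v - 1)` because `deg v ∈ {1, 2}`, and a matching edge
contributes `1 · 1`. By the handshake lemma `∑_{v ≠ 0} (deg v - 1) = 2k`, hence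
`Sz_e = (2(|E| - 2) + 1) k` with `|E| = n - 1 + k`.
-/

open SimpleGraph Finset
open scoped Classical

noncomputable section

variable {V : Type*}

/-- number of vertices strictly closer to `u` than to `v` -/
def szN (G : SimpleGraph V) (u v : V) : ℕ :=
  {w : V | G.dist u w < G.dist v w}.ncard

/-- distance from an edge (unordered pair) to a vertex -/
def eDist (G : SimpleGraph V) (e : Sym2 V) (w : V) : ℕ :=
  Sym2.lift ⟨fun x y => min (G.dist x w) (G.dist y w), fun x y => min_comm _ _⟩ e

/-- number of edges strictly closer to `u` than to `v` -/
def szM (G : SimpleGraph V) (u v : V) : ℕ :=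
  {e : Sym2 V | e ∈ G.edgeSet ∧ eDist G e u < eDist G e v}.ncard

/-- edge Szeged index -/
def szE [Fintype V] (G : SimpleGraph V) : ℕ :=
  ∑ e ∈ G.edgeFinset,
    Sym2.lift ⟨fun u v => szM G u v * szM G v u, fun u v => mul_comm _ _⟩ e

/-- edge-vertex Szeged index -/
def szEV [Fintype V] (G : SimpleGraph V) : ℚ :=
  (1/2) * ∑ e ∈ G.edgeFinset,
    Sym2.lift ⟨fun u v => ((szN G u v * szM G v u + szN G v u * szM G u v : ℕ) : ℚ),
      fun u v => by push_cast; ring⟩ e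
/-- the cactus `C₀(n,k)`: `k` triangles and `n - 2k - 1` pendant edges sharing
the common vertex `0`; for `1 ≤ j ≤ k` the vertices `2j-1, 2j` together with `0`
form a triangle, and the vertices `2k+1, …, n-1` are pendant vertices at `0`. -/
def C0 (n k : ℕ) : SimpleGraph (Fin n) where
  Adj a b := a ≠ b ∧ (a.val = 0 ∨ b.val = 0 ∨
    (a.val ≤ 2*k ∧ b.val ≤ 2*k ∧ (a.val + 1)/2 = (b.val + 1)/2))
  symm := by
    constructor
    rintro a b ⟨h1, h2⟩
    refine ⟨h1.symm, ?_⟩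
    rcases h2 with h | h | ⟨h3, h4, h5⟩
    · exact Or.inr (Or.inl h)
    · exact Or.inl h
    · exact Or.inr (Or.inr ⟨h4, h3, h5.symm⟩)
  loopless := by constructor; rintro a ⟨h1, -⟩; exact h1 rfl

/-- a cactus: a connected graph in which any two cycles (cycles with distinct
edge sets) have at most one common vertex -/
def IsCactus (G : SimpleGraph V) : Prop :=
  G.Connected ∧ ∀ ⦃a b : V⦄ (c₁ : G.Walk a a) (c₂ : G.Walk b b),
    c₁.IsCycle → c₂.IsCycle →
    (¬ ∀ e : Sym2 V, e ∈ c₁.edges ↔ e ∈ c₂.edges) →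
    ∀ x y : V, x ∈ c₁.support → x ∈ c₂.support → y ∈ c₁.support → y ∈ c₂.support →
      x = y

namespace SimpleGraph

variable {G : SimpleGraph V} {z : V}

lemma IsUniversal.dist_eq (hz : G.IsUniversal z) (x y : V) :
    G.dist x y = if x = y then 0 else if G.Adj x y then 1 else 2 := by
  split_ifs with hxy hxy'
  · simp [hxy]
  · exact dist_eq_one_iff_adj.mpr hxy'
  · have hxz : z ≠ x := by rintro rfl; exact hxy' (hz hxy)
    have hyz : z ≠ y := by rintro rfl; exact hxy' (hz (Ne.symm hxy)).symm
    have hle := dist_le (.cons (hz hxz).symm (.cons (hz hyz) .nil))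
    have hpos := (Reachable.of_isUniversal x hz |>.symm.trans
      (Reachable.of_isUniversal y hz)).pos_dist_of_ne hxy
    have hne : G.dist x y ≠ 1 := fun h => hxy' (dist_eq_one_iff_adj.mp h)
    simp only [Walk.length_cons, Walk.length_nil] at hle
    omega

lemma IsUniversal.eDist_mk (hz : G.IsUniversal z) (x y w : V) :
    eDist G s(x, y) w =
      if w = x ∨ w = y then 0 else if G.Adj x w ∨ G.Adj y w then 1 else 2 := by
  simp only [eDist, Sym2.lift_mk, hz.dist_eq]
  split_ifs <;> grind

variable [Fintype V]

lemma IsUniversal.szM_eq_degree_sub_one (hz : G.IsUniversal z) {a b : V} (hab : G.Adj a b)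
    (hN : ∀ ⦃x⦄, x ≠ b → G.Adj a x → G.Adj b x) : szM G a b = G.degree a - 1 := by
  have hset : {e | e ∈ G.edgeSet ∧ eDist G e a < eDist G e b} =
      ↑((G.incidenceFinset a).erase s(a, b)) := by
    ext e
    induction e using Sym2.ind with | _ x y => ?_
    simp only [Set.mem_ofPred_eq, coe_erase, Set.mem_sdiff, mem_coe, mem_incidenceFinset,
      mk'_mem_incidenceSet_iff, mem_edgeSet, hz.eDist_mk, Set.mem_singleton_iff, Sym2.eq_iff]
    split_ifs <;> grind [adj_comm, ne_of_adj, G.ne_of_adj hab]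
  rw [szM, hset, Set.ncard_coe_finset, card_erase_of_mem (by simpa using hab),
    card_incidenceFinset_eq_degree]

lemma IsUniversal.szM_eq_card_edgeFinset_sub_degree (hz : G.IsUniversal z) {w : V}
    (hN : ∀ ⦃x y⦄, G.Adj w x → G.Adj x y → x ≠ z → y = z ∨ y = w) :
    szM G z w = #G.edgeFinset - G.degree w := by
  have hset : {e | e ∈ G.edgeSet ∧ eDist G e z < eDist G e w} =
      ↑(G.edgeFinset \ G.incidenceFinset w) := by
    ext e
    induction e using Sym2.ind with | _ x y => ?_
    simp only [Set.mem_ofPred_eq, coe_sdiff, Set.mem_sdiff, mem_coe, mem_incidenceFinset,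
      mk'_mem_incidenceSet_iff, mem_edgeSet, mem_edgeFinset, hz.eDist_mk]
    split_ifs <;> grind [adj_comm, ne_of_adj, IsUniversal]
  rw [szM, hset, Set.ncard_coe_finset, card_sdiff_of_subset (G.incidenceFinset_subset w),
    card_incidenceFinset_eq_degree]

lemma IsUniversal.card_edgeFinset (hz : G.IsUniversal z) :
    #G.edgeFinset = (Fintype.card V - 1) + #{e ∈ G.edgeFinset | z ∉ e} := by
  rw [← card_filter_add_card_filter_not (z ∈ ·), ← incidenceFinset_eq_filter,
    card_incidenceFinset_eq_degree, (G.degree_eq_card_sub_one z).mpr hz]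

lemma IsUniversal.sum_degree_sub_one (hz : G.IsUniversal z) :
    ∑ v ∈ univ.erase z, (G.degree v - 1) = 2 * #{e ∈ G.edgeFinset | z ∉ e} := by
  have hdeg := G.sum_degrees_eq_twice_card_edges
  rw [← add_sum_erase _ _ (mem_univ z), (G.degree_eq_card_sub_one z).mpr hz,
    hz.card_edgeFinset] at hdeg
  have hsub : ∑ v ∈ univ.erase z, (G.degree v - 1) + #(univ.erase z) =
      ∑ v ∈ univ.erase z, G.degree v := by
    rw [card_eq_sum_ones, ← sum_add_distrib]
    refine sum_congr rfl fun v hv => Nat.sub_add_cancel ?_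
    exact G.degree_pos_iff_exists_adj v |>.mpr ⟨z, (hz (ne_of_mem_erase hv).symm).symm⟩
  rw [card_erase_of_mem (mem_univ z), card_univ] at hsub
  omega

structure IsConeOverMatching (G : SimpleGraph V) (z : V) : Prop where
  isUniversal : G.IsUniversal z
  eq_of_adj_of_adj :
    ∀ ⦃v x y⦄, v ≠ z → x ≠ z → y ≠ z → G.Adj v x → G.Adj v y → x = y

namespace IsConeOverMatching

lemma degree_le_two (hG : G.IsConeOverMatching z) {v : V} (hv : v ≠ z) :
    G.degree v ≤ 2 := by
  have hrest : #((G.neighborFinset v).erase z) ≤ 1 := card_le_one.mpr fun x hx y hy => by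
    simp only [mem_erase, mem_neighborFinset] at hx hy
    exact hG.eq_of_adj_of_adj hv hx.1 hy.1 hx.2 hy.2
  have hcard := pred_card_le_card_erase (s := G.neighborFinset v) (a := z)
  rw [card_neighborFinset_eq_degree] at hcard
  omega

lemma degree_eq_two (hG : G.IsConeOverMatching z) {a b : V} (ha : a ≠ z) (hb : b ≠ z)
    (hab : G.Adj a b) : G.degree a = 2 := by
  refine le_antisymm (hG.degree_le_two ha) ?_
  rw [← card_neighborFinset_eq_degree, ← card_pair hb.symm]
  refine card_le_card fun x hx => ?_
  rcases mem_insert.mp hx with rfl | hx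
  · exact (G.mem_neighborFinset _ _).mpr (hG.isUniversal ha.symm).symm
  · rw [mem_singleton.mp hx]
    exact (G.mem_neighborFinset _ _).mpr hab

lemma szM_mul_szM_spoke (hG : G.IsConeOverMatching z) {v : V} (hv : v ≠ z) :
    szM G z v * szM G v z = (#G.edgeFinset - 2) * (G.degree v - 1) := by
  have hz := hG.isUniversal
  have hvz : G.Adj v z := (hz hv.symm).symm
  rw [hz.szM_eq_card_edgeFinset_sub_degree fun x y hvx hxy hx => ?_,
    hz.szM_eq_degree_sub_one hvz fun x hx _ => hz (Ne.symm hx)]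
  · have hpos := G.degree_pos_iff_exists_adj v |>.mpr ⟨z, hvz⟩
    obtain hdeg | hdeg : G.degree v = 1 ∨ G.degree v = 2 := by
      have := hG.degree_le_two hv; omega
    all_goals simp [hdeg]
  · by_cases hy : y = z
    · exact .inl hy
    · exact .inr (hG.eq_of_adj_of_adj hx hy hv hxy hvx.symm)

lemma szM_eq_one (hG : G.IsConeOverMatching z) {a b : V} (ha : a ≠ z) (hb : b ≠ z)
    (hab : G.Adj a b) : szM G a b = 1 := by
  have hz := hG.isUniversal
  rw [hz.szM_eq_degree_sub_one hab fun x hxb hax => ?_, hG.degree_eq_two ha hb hab]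
  by_cases hx : x = z
  · exact hx ▸ (hz hb.symm).symm
  · exact absurd (hG.eq_of_adj_of_adj ha hx hb hax hab) hxb

lemma szE_eq (hG : G.IsConeOverMatching z) :
    szE G = (2 * (#G.edgeFinset - 2) + 1) * (#G.edgeFinset - (Fintype.card V - 1)) := by
  have hspokes : {e ∈ G.edgeFinset | z ∈ e} = (univ.erase z).image (fun v => s(z, v)) := by
    ext e
    induction e using Sym2.ind with | _ x y => ?_
    simp only [mem_filter, mem_edgeFinset, mem_edgeSet, Sym2.mem_iff, mem_image, mem_erase,
      mem_univ, and_true, Sym2.eq_iff]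
    constructor
    · rintro ⟨hxy, rfl | rfl⟩
      · exact ⟨y, hxy.ne.symm, .inl ⟨rfl, rfl⟩⟩
      · exact ⟨x, hxy.ne, .inr ⟨rfl, rfl⟩⟩
    · rintro ⟨v, hv, ⟨rfl, rfl⟩ | ⟨rfl, rfl⟩⟩
      · exact ⟨hG.isUniversal (Ne.symm hv), .inl rfl⟩
      · exact ⟨(hG.isUniversal (Ne.symm hv)).symm, .inr rfl⟩
  rw [szE, ← sum_filter_add_sum_filter_not _ (z ∈ ·), hspokes,
    sum_image fun _ _ _ _ => Sym2.congr_right.mp]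
  have hrungs : ∀ e ∈ G.edgeFinset.filter (z ∉ ·),
      Sym2.lift ⟨fun u v => szM G u v * szM G v u, fun u v => mul_comm _ _⟩ e = 1 := by
    intro e he
    induction e using Sym2.ind with | _ x y => ?_
    simp only [mem_filter, mem_edgeFinset, mem_edgeSet, Sym2.mem_iff, not_or] at he
    obtain ⟨hxy, hzx, hzy⟩ := he
    simp only [Sym2.lift_mk, hG.szM_eq_one (Ne.symm hzx) (Ne.symm hzy) hxy,
      hG.szM_eq_one (Ne.symm hzy) (Ne.symm hzx) hxy.symm]
  simp only [Sym2.lift_mk]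
  rw [sum_congr rfl fun v hv => hG.szM_mul_szM_spoke (ne_of_mem_erase hv), ← mul_sum,
    hG.isUniversal.sum_degree_sub_one, sum_congr rfl hrungs, sum_const, smul_eq_mul, mul_one,
    hG.isUniversal.card_edgeFinset, Nat.add_sub_cancel_left]
  ring

end IsConeOverMatching

end SimpleGraph

lemma c0_adj {n k : ℕ} {a b : Fin n} :
    (C0 n k).Adj a b ↔ a ≠ b ∧ (a.val = 0 ∨ b.val = 0 ∨
      (a.val ≤ 2 * k ∧ b.val ≤ 2 * k ∧ (a.val + 1) / 2 = (b.val + 1) / 2)) := Iff.rfl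

lemma isConeOverMatching_c0 {n k : ℕ} (hn : 0 < n) : (C0 n k).IsConeOverMatching ⟨0, hn⟩ where
  isUniversal _ hw := ⟨hw, .inl rfl⟩
  eq_of_adj_of_adj v x y hv hx hy hvx hvy := by
    simp only [c0_adj, ne_eq, Fin.ext_iff] at hv hx hy hvx hvy ⊢
    omega

lemma card_edgeFinset_c0 {n k : ℕ} (h : 2 * k + 1 ≤ n) :
    #(C0 n k).edgeFinset = n - 1 + k := by
  rw [(isConeOverMatching_c0 (by omega)).isUniversal.card_edgeFinset, Fintype.card_fin]
  congr 1
  refine .trans ?_ (card_range k)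
  refine .symm <| card_bij
    (fun j hj => s(⟨2 * j + 1, by simp at hj; omega⟩, ⟨2 * j + 2, by simp at hj; omega⟩))
    (fun j hj => ?_) (fun i _ j _ hij => ?_) (fun e he => ?_)
  · simp only [mem_range] at hj
    simp only [mem_filter, mem_edgeFinset, mem_edgeSet, c0_adj, Sym2.mem_iff, ne_eq,
      Fin.ext_iff]
    omega
  · simp only [Sym2.eq_iff, Fin.ext_iff] at hij
    omega
  · induction e using Sym2.ind with | _ x y => ?_
    simp only [mem_filter, mem_edgeFinset, mem_edgeSet, c0_adj, Sym2.mem_iff, ne_eq,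
      Fin.ext_iff] at he
    simp only [mem_range, Sym2.eq_iff, Fin.ext_iff]
    rcases lt_or_gt_of_ne he.1.1 with hxy | hxy
    · exact ⟨(x.val - 1) / 2, by omega, by omega⟩
    · exact ⟨(y.val - 1) / 2, by omega, by omega⟩

theorem edge_szeged_C0_general (n k : ℕ) (h : 2*k + 1 ≤ n) :
    (szE (C0 n k) : ℤ) = 2*k*n + 2*k^2 - 5*k := by
  rw [(isConeOverMatching_c0 (by omega)).szE_eq, card_edgeFinset_c0 h, Fintype.card_fin,
    Nat.add_sub_cancel_left]
  rcases k.eq_zero_or_pos with rfl | hk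
  · simp
  · have hm : ((n - 1 + k - 2 : ℕ) : ℤ) = n + k - 3 := by omega
    push_cast [hm]
    ring

/-- For integers `n ≥ 2k + 1` and `k ≥ 0`, the edge Szeged index of `C₀(n,k)`
equals `2kn + 2k² - 5k`. -/
theorem edge_szeged_C0 (n k : ℕ) (h : 2*k + 1 ≤ n) (hk : 0 ≤ k) :
    (szE (C0 n k) : ℤ) = 2*k*n + 2*k^2 - 5*k :=
  edge_szeged_C0_general n k h
end
end

section
/- For integers n and k with n ≥ 2k + 1 and k ≥ 0, the edge-vertex Szeged index of C_0(n,k) equals (1/2)(n² − 3n + 3kn − 5k + 2). -/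
open SimpleGraph Finset
open scoped Classical

noncomputable section

variable {V : Type*}

/-! `C₀(n,k)` is the cone with apex `0` over `k` disjoint edges and `n - 2k - 1` isolated
vertices. In such a cone every distance is at most `2`, and an edge `xy` avoiding the apex
joins twins, so all its four Szeged counts are `1`. For an apex edge `cv` with `d = deg v`
one finds `n_c = N - d`, `n_v = 1`, `m_v = d - 1`, `m_c = |E| - d`; since `d ∈ {1, 2}` the
contribution is affine in `d`, and the handshake lemma gives `∑_{v ≠ c} (d_v - 1) = 2m`,
`m` the number of edges avoiding the apex. -/

namespace SimpleGraph

variable {G : SimpleGraph V} {c u v w x y : V} {e : Sym2 V}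

theorem eDist_mk : eDist G s(x, y) w = min (G.dist x w) (G.dist y w) := rfl

theorem Connected.eDist_eq_zero_iff (hG : G.Connected) : eDist G e w = 0 ↔ w ∈ e := by
  induction e using Sym2.ind with
  | h x y => rw [eDist_mk, Nat.min_eq_zero_iff, hG.dist_eq_zero_iff, hG.dist_eq_zero_iff,
      Sym2.mem_iff, eq_comm, eq_comm (a := y)]

theorem szN_eq_card [Fintype V] : szN G u v = #{w | G.dist u w < G.dist v w} := by
  rw [szN, ← Set.ncard_coe_finset, coe_filter]
  simp only [mem_univ, true_and]

theorem szM_eq_card [Fintype V] :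
    szM G u v = #{e ∈ G.edgeFinset | eDist G e u < eDist G e v} := by
  rw [szM, ← Set.ncard_coe_finset, coe_filter]
  simp only [mem_edgeFinset]

structure IsConeOverMatching_s17 (G : SimpleGraph V) (c : V) : Prop where
  adj_apex : ∀ ⦃v⦄, v ≠ c → G.Adj c v
  eq_of_adj_of_adj : ∀ ⦃x y z⦄, x ≠ c → y ≠ c → z ≠ c → G.Adj x y → G.Adj x z → y = z

namespace IsConeOverMatching_s17

variable (hG : G.IsConeOverMatching_s17 c)
include hG

theorem connected : G.Connected := by
  have : Nonempty V := ⟨c⟩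
  refine (connected_iff_exists_forall_reachable G).mpr ⟨c, fun v => ?_⟩
  by_cases hv : v = c
  · rw [hv]
  · exact (hG.adj_apex hv).reachable

theorem dist_apex (hv : v ≠ c) : G.dist c v = 1 :=
  dist_eq_one_iff_adj.mpr (hG.adj_apex hv)

theorem dist_eq_two (hne : v ≠ w) (hvw : ¬ G.Adj v w) : G.dist v w = 2 := by
  have hv : v ≠ c := by rintro rfl; exact hvw (hG.adj_apex hne.symm)
  have hw : w ≠ c := by rintro rfl; exact hvw (hG.adj_apex hne).symm
  have hle := dist_le ((Walk.nil.cons (hG.adj_apex hw)).cons (hG.adj_apex hv).symm)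
  have hlt := hG.connected.one_lt_dist_of_ne_of_not_adj hne hvw
  simp only [Walk.length_cons, Walk.length_nil] at hle
  omega

theorem eDist_apex : eDist G e c = if c ∈ e then 0 else 1 := by
  induction e using Sym2.ind with
  | h x y =>
    by_cases hx : x = c
    · subst hx; simp [eDist_mk]
    by_cases hy : y = c
    · subst hy; simp [eDist_mk]
    simp [eDist_mk, dist_comm (u := x), dist_comm (u := y), hG.dist_apex hx, hG.dist_apex hy,
      Ne.symm hx, Ne.symm hy]

theorem dist_eq_dist_of_adj (hx : x ≠ c) (hy : y ≠ c) (hxy : G.Adj x y) (hwx : w ≠ x)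
    (hwy : w ≠ y) : G.dist x w = G.dist y w := by
  by_cases hw : w = c
  · rw [hw, dist_comm, hG.dist_apex hx, dist_comm, hG.dist_apex hy]
  have hxw : ¬ G.Adj x w := fun h => hwy (hG.eq_of_adj_of_adj hx hw hy h hxy)
  have hyw : ¬ G.Adj y w := fun h => hwx (hG.eq_of_adj_of_adj hy hw hx h hxy.symm)
  rw [hG.dist_eq_two (Ne.symm hwx) hxw, hG.dist_eq_two (Ne.symm hwy) hyw]

theorem eDist_eq_eDist_of_adj (hx : x ≠ c) (hy : y ≠ c) (hxy : G.Adj x y) (hxe : x ∉ e)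
    (hye : y ∉ e) : eDist G e x = eDist G e y := by
  induction e using Sym2.ind with
  | h a b =>
    simp only [Sym2.mem_iff, not_or] at hxe hye
    rw [eDist_mk, eDist_mk, dist_comm, dist_comm (u := b),
      hG.dist_eq_dist_of_adj hx hy hxy (Ne.symm hxe.1) (Ne.symm hye.1),
      hG.dist_eq_dist_of_adj hx hy hxy (Ne.symm hxe.2) (Ne.symm hye.2), dist_comm,
      dist_comm (u := y)]

variable [Fintype V]

theorem one_le_degree (hv : v ≠ c) : 1 ≤ G.degree v :=
  (G.degree_pos_iff_exists_adj v).mpr ⟨c, (hG.adj_apex hv).symm⟩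

variable [DecidableEq V]

theorem degree_le_two_s17 (hv : v ≠ c) : G.degree v ≤ 2 := by
  have hcard : #((G.neighborFinset v).erase c) ≤ 1 := card_le_one.mpr fun y hy z hz => by
    simp only [mem_erase, mem_neighborFinset] at hy hz
    exact hG.eq_of_adj_of_adj hv hy.1 hz.1 hy.2 hz.2
  rw [← card_neighborFinset_eq_degree,
    ← card_erase_add_one ((G.mem_neighborFinset v c).mpr (hG.adj_apex hv).symm)]
  omega

theorem degree_apex : G.degree c = Fintype.card V - 1 := by
  rw [← card_neighborFinset_eq_degree, ← card_univ, ← card_erase_of_mem (mem_univ c)]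
  congr 1
  ext v
  simp only [mem_neighborFinset, mem_erase, mem_univ, and_true]
  exact ⟨fun h => h.ne.symm, fun h => hG.adj_apex h⟩

theorem szN_apex_left (hv : v ≠ c) : szN G c v = Fintype.card V - G.degree v := by
  have hcompl : ({w | G.dist c w < G.dist v w} : Finset V) =
      (insert v ((G.neighborFinset v).erase c))ᶜ := by
    ext w
    simp only [mem_filter, mem_univ, true_and, mem_compl, mem_insert, mem_erase,
      mem_neighborFinset, not_or, not_and]
    by_cases hw : w = c
    · subst hw
      simpa [Ne.symm hv] using hG.connected.pos_dist_of_ne hv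
    by_cases hwv : w = v
    · subst hwv; simp
    by_cases hvw : G.Adj v w
    · simp [hG.dist_apex hw, hvw, hwv, hw, dist_eq_one_iff_adj.mpr hvw]
    · simp [hG.dist_apex hw, hvw, hwv, hG.dist_eq_two (Ne.symm hwv) hvw]
  rw [szN_eq_card, hcompl, card_compl, card_insert_of_notMem (by simp),
    card_erase_of_mem ((G.mem_neighborFinset v c).mpr (hG.adj_apex hv).symm),
    card_neighborFinset_eq_degree, Nat.sub_add_cancel (hG.one_le_degree hv)]

theorem szN_apex_right (hv : v ≠ c) : szN G v c = 1 := by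
  rw [szN_eq_card, card_eq_one]
  refine ⟨v, ?_⟩
  ext w
  simp only [mem_filter, mem_univ, true_and, mem_singleton]
  by_cases hw : w = c
  · subst hw; simp [Ne.symm hv]
  rw [hG.dist_apex hw, Nat.lt_one_iff, hG.connected.dist_eq_zero_iff, eq_comm]

theorem szM_apex_left (hv : v ≠ c) : szM G c v = #G.edgeFinset - G.degree v := by
  have hfilter : ({e ∈ G.edgeFinset | eDist G e c < eDist G e v} : Finset _) =
      {e ∈ G.edgeFinset | v ∉ e} := by
    refine filter_congr fun e he => ?_
    rw [hG.eDist_apex]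
    split_ifs with hce
    · rw [Nat.pos_iff_ne_zero, Ne, hG.connected.eDist_eq_zero_iff]
    induction e using Sym2.ind with
    | h a b =>
      have hab : G.Adj a b := mem_edgeFinset.mp he
      refine ⟨fun hlt hve => ?_, fun hve => ?_⟩
      · rw [hG.connected.eDist_eq_zero_iff.mpr hve] at hlt
        omega
      · simp only [Sym2.mem_iff, not_or] at hce hve
        have hav : ¬ G.Adj a v := fun h =>
          hve.2 (hG.eq_of_adj_of_adj (Ne.symm hce.1) (Ne.symm hce.2) hv hab h).symm
        have hbv : ¬ G.Adj b v := fun h =>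
          hve.1 (hG.eq_of_adj_of_adj (Ne.symm hce.2) (Ne.symm hce.1) hv hab.symm h).symm
        rw [eDist_mk, hG.dist_eq_two (Ne.symm hve.1) hav, hG.dist_eq_two (Ne.symm hve.2) hbv]
        omega
  have hsplit := card_filter_add_card_filter_not (s := G.edgeFinset) (v ∈ ·)
  rw [← incidenceFinset_eq_filter, card_incidenceFinset_eq_degree] at hsplit
  rw [szM_eq_card, hfilter]
  omega

theorem szM_apex_right (hv : v ≠ c) : szM G v c = G.degree v - 1 := by
  have hfilter : ({e ∈ G.edgeFinset | eDist G e v < eDist G e c} : Finset _) =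
      (G.incidenceFinset v).erase s(v, c) := by
    ext e
    rw [incidenceFinset_eq_filter, mem_erase, mem_filter, mem_filter, hG.eDist_apex, ne_eq,
      ← Sym2.mem_and_mem_iff hv]
    split_ifs with hce
    · simp +contextual [hce]
    · rw [Nat.lt_one_iff, hG.connected.eDist_eq_zero_iff]
      tauto
  have hmem : s(v, c) ∈ G.incidenceFinset v :=
    (G.mem_incidenceFinset v _).mpr ⟨(hG.adj_apex hv).symm, Sym2.mem_mk_left v c⟩
  rw [szM_eq_card, hfilter, card_erase_of_mem hmem, card_incidenceFinset_eq_degree]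

theorem szN_of_adj (hx : x ≠ c) (hy : y ≠ c) (hxy : G.Adj x y) : szN G x y = 1 := by
  rw [szN_eq_card, card_eq_one]
  refine ⟨x, ?_⟩
  ext w
  simp only [mem_filter, mem_univ, true_and, mem_singleton]
  by_cases hwx : w = x
  · subst hwx
    simpa using hG.connected.pos_dist_of_ne hxy.ne.symm
  by_cases hwy : w = y
  · subst hwy
    simp [dist_eq_one_iff_adj.mpr hxy, hwx]
  simp [hG.dist_eq_dist_of_adj hx hy hxy hwx hwy, hwx]

theorem szM_of_adj (hx : x ≠ c) (hy : y ≠ c) (hxy : G.Adj x y) : szM G x y = 1 := by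
  rw [szM_eq_card, card_eq_one]
  refine ⟨s(c, x), ?_⟩
  ext e
  simp only [mem_filter, mem_singleton, mem_edgeFinset]
  constructor
  · rintro ⟨he, hlt⟩
    have hye : y ∉ e := fun hye => by
      rw [(hG.connected.eDist_eq_zero_iff).mpr hye] at hlt
      omega
    have hxe : x ∈ e := by
      by_contra hxe
      rw [hG.eDist_eq_eDist_of_adj hx hy hxy hxe hye] at hlt
      exact lt_irrefl _ hlt
    obtain ⟨z, rfl⟩ := Sym2.mem_iff_exists.mp hxe
    have hzy : z ≠ y := fun h => hye (h ▸ Sym2.mem_mk_right x z)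
    have hzc : z = c := by
      by_contra hzc
      exact hzy (hG.eq_of_adj_of_adj hx hzc hy he hxy)
    rw [hzc, Sym2.eq_swap]
  · rintro rfl
    refine ⟨hG.adj_apex hx, ?_⟩
    rw [(hG.connected.eDist_eq_zero_iff).mpr (Sym2.mem_mk_right c x), Nat.pos_iff_ne_zero, Ne,
      hG.connected.eDist_eq_zero_iff, Sym2.mem_iff, not_or]
    exact ⟨hy, hxy.ne.symm⟩

theorem incidenceFinset_apex : G.incidenceFinset c = (univ.erase c).image (s(c, ·)) := by
  ext e
  simp only [incidenceFinset_eq_filter, mem_filter, mem_image, mem_erase, mem_univ, and_true,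
    mem_edgeFinset]
  constructor
  · rintro ⟨he, hce⟩
    obtain ⟨v, rfl⟩ := Sym2.mem_iff_exists.mp hce
    exact ⟨v, (G.ne_of_adj he).symm, rfl⟩
  · rintro ⟨v, hv, rfl⟩
    exact ⟨hG.adj_apex hv, Sym2.mem_mk_left c v⟩

theorem card_edgeFinset_add_one :
    #G.edgeFinset + 1 = Fintype.card V + #{e ∈ G.edgeFinset | c ∉ e} := by
  have hsplit := card_filter_add_card_filter_not (s := G.edgeFinset) (c ∈ ·)
  have hc := Fintype.card_pos_iff.mpr ⟨c⟩
  rw [← incidenceFinset_eq_filter, card_incidenceFinset_eq_degree, hG.degree_apex] at hsplit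
  omega

theorem sum_degree_erase_apex_add_one :
    ∑ v ∈ univ.erase c, G.degree v + 1 = Fintype.card V + 2 * #{e ∈ G.edgeFinset | c ∉ e} := by
  have hsum := G.sum_degrees_eq_twice_card_edges
  have hc := Fintype.card_pos_iff.mpr ⟨c⟩
  have hE := hG.card_edgeFinset_add_one
  rw [← add_sum_erase _ _ (mem_univ c), hG.degree_apex] at hsum
  omega

theorem szN_mul_szM_add_apex (hv : v ≠ c) :
    ((szN G c v * szM G v c + szN G v c * szM G c v : ℕ) : ℚ) =
      Fintype.card V + #{e ∈ G.edgeFinset | c ∉ e} - 2 +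
        (Fintype.card V - 3) * (G.degree v - 1) := by
  have hE : (#G.edgeFinset : ℚ) + 1 = Fintype.card V + #{e ∈ G.edgeFinset | c ∉ e} := by
    exact_mod_cast hG.card_edgeFinset_add_one
  have hdN : G.degree v ≤ Fintype.card V := (G.degree_lt_card_verts v).le
  have hdE : G.degree v ≤ #G.edgeFinset := by
    rw [← card_incidenceFinset_eq_degree]
    exact card_le_card (incidenceFinset_subset G v)
  rw [hG.szN_apex_left hv, hG.szN_apex_right hv, hG.szM_apex_left hv, hG.szM_apex_right hv]
  push_cast [Nat.cast_sub hdN, Nat.cast_sub hdE, Nat.cast_sub (hG.one_le_degree hv)]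
  obtain hd | hd : G.degree v = 1 ∨ G.degree v = 2 := by
    have := hG.one_le_degree hv; have := hG.degree_le_two_s17 hv; omega
  all_goals rw [hd]; push_cast; linarith

theorem szN_mul_szM_add_of_adj (hx : x ≠ c) (hy : y ≠ c) (hxy : G.Adj x y) :
    szN G x y * szM G y x + szN G y x * szM G x y = 2 := by
  rw [hG.szN_of_adj hx hy hxy, hG.szN_of_adj hy hx hxy.symm, hG.szM_of_adj hx hy hxy,
    hG.szM_of_adj hy hx hxy.symm]

theorem szEV_eq :
    szEV G = (((Fintype.card V : ℚ) - 1) * (Fintype.card V + #{e ∈ G.edgeFinset | c ∉ e} - 2) +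
      2 * #{e ∈ G.edgeFinset | c ∉ e} * (Fintype.card V - 2)) / 2 := by
  have hdeg : ∑ v ∈ univ.erase c, (G.degree v : ℚ) + 1 =
      Fintype.card V + 2 * #{e ∈ G.edgeFinset | c ∉ e} := by
    exact_mod_cast hG.sum_degree_erase_apex_add_one
  have hrim : ∀ e ∈ ({e ∈ G.edgeFinset | c ∉ e} : Finset _),
      Sym2.lift ⟨fun u v => ((szN G u v * szM G v u + szN G v u * szM G u v : ℕ) : ℚ),
        fun u v => by push_cast; ring⟩ e = 2 := by
    intro e he
    induction e using Sym2.ind with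
    | h x y =>
      rw [mem_filter, mem_edgeFinset, mem_edgeSet, Sym2.mem_iff, not_or] at he
      obtain ⟨hxy, hx, hy⟩ := he
      simp only [Sym2.lift_mk]
      exact_mod_cast hG.szN_mul_szM_add_of_adj (Ne.symm hx) (Ne.symm hy) hxy
  rw [szEV, ← sum_filter_add_sum_filter_not _ (c ∈ ·), ← incidenceFinset_eq_filter,
    hG.incidenceFinset_apex, sum_image fun _ _ _ _ h => Sym2.congr_right.mp h,
    sum_congr rfl hrim]
  simp only [Sym2.lift_mk]
  rw [sum_congr rfl fun v hv => hG.szN_mul_szM_add_apex (mem_erase.mp hv).1]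
  simp only [sum_add_distrib, ← mul_sum, sum_sub_distrib, sum_const,
    card_erase_of_mem (mem_univ c), card_univ, nsmul_eq_mul]
  push_cast [Nat.cast_sub (Fintype.card_pos_iff.mpr ⟨c⟩)]
  linear_combination ((Fintype.card V : ℚ) - 3) / 2 * hdeg

end IsConeOverMatching_s17

end SimpleGraph

theorem isConeOverMatching_C0 (n k : ℕ) [NeZero n] : (C0 n k).IsConeOverMatching_s17 0 where
  adj_apex v hv := ⟨hv.symm, Or.inl (Fin.val_zero n)⟩
  eq_of_adj_of_adj x y z hx hy hz hxy hxz := by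
    simp only [C0, ne_eq, Fin.ext_iff, Fin.val_zero] at hx hy hz hxy hxz ⊢
    omega

theorem card_edgeFinset_C0_filter_zero_notMem {n k : ℕ} [NeZero n] (h : 2 * k + 1 ≤ n) :
    #{e ∈ (C0 n k).edgeFinset | (0 : Fin n) ∉ e} = k := by
  let rim (j : Fin k) : Sym2 (Fin n) :=
    s(⟨2 * j + 1, by have := j.isLt; omega⟩, ⟨2 * j + 2, by have := j.isLt; omega⟩)
  have hrim : ({e ∈ (C0 n k).edgeFinset | (0 : Fin n) ∉ e} : Finset _) = univ.image rim := by
    ext e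
    induction e using Sym2.ind with
    | h a b =>
      simp only [rim, mem_filter, mem_edgeFinset, mem_edgeSet, mem_image, mem_univ, true_and,
        Sym2.mem_iff, Sym2.eq_iff, not_or]
      simp only [C0, ne_eq, Fin.ext_iff, Fin.val_zero]
      constructor
      · rintro ⟨hab, ha, hb⟩
        exact ⟨⟨(a.val - 1) / 2, by omega⟩, by dsimp only; omega⟩
      · rintro ⟨j, hj⟩
        have := j.isLt
        omega
  have hinj : Function.Injective rim := fun i j hij => by
    simp only [rim, Sym2.eq_iff, Fin.ext_iff] at hij
    omega
  rw [hrim, card_image_of_injective _ hinj, card_univ, Fintype.card_fin]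

theorem edge_vertex_szeged_C0_general (n k : ℕ) (h : 2*k + 1 ≤ n) :
    szEV (C0 n k) = (1/2 : ℚ) * ((n : ℚ)^2 - 3*n + 3*k*n - 5*k + 2) := by
  have : NeZero n := ⟨by omega⟩
  rw [(isConeOverMatching_C0 n k).szEV_eq, card_edgeFinset_C0_filter_zero_notMem h,
    Fintype.card_fin]
  ring

/-- For integers `n ≥ 2k + 1` and `k ≥ 0`, the edge-vertex Szeged index of
`C₀(n,k)` equals `(1/2)(n² - 3n + 3kn - 5k + 2)`. -/
theorem edge_vertex_szeged_C0 (n k : ℕ) (h : 2*k + 1 ≤ n) (hk : 0 ≤ k) :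
    szEV (C0 n k) = (1/2 : ℚ) * ((n : ℚ)^2 - 3*n + 3*k*n - 5*k + 2) :=
  edge_vertex_szeged_C0_general n k h
end
end
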